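/- For Borel functions w_k, w : [0,T] → ℝ^l (k ∈ ℕ), the pseudo-paths of w_k converge weakly to the pseudo-path of w (i.e., ∫ φ dΨ(w_k) → ∫ φ dΨ(w) for every bounded continuous φ : [0,T]×ℝ^l → ℝ) if and only if w_k converges to w in λ-measure (i.e., for every δ > 0, λ{ t ∈ [0,T] : |w_k(t) − w(t)| > δ } → 0 as k → ∞). (Lemma 6 of the paper: the pseudo-path (Meyer–Zheng) topology is equivalent to convergence in measure.) -/

import Mathlib

/-!
Convergence in measure gives weak convergence by passing to almost everywhere convergent
subsequences and dominated convergence, since `(t, w_k t) → (t, w t)` in measure. Conversely,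
approximate `w` by a bounded continuous `v`, up to small `∫ min 1 |w - v| dλ`, through simple
functions and the density of bounded continuous functions in `L¹(λ)`. The test function
`(t, x) ↦ min 1 |x - v t|` then controls `∫ min 1 |w_k - w| dλ` by the triangle inequality, and
this truncated distance dominates `λ {|w_k - w| > δ}` up to a factor by Markov's inequality.
-/

open Set Filter MeasureTheory Topology

noncomputable section

/-- `ℝˡ` as a real inner product space. -/
abbrev Vec (l : ℕ) := EuclideanSpace ℝ (Fin l)

/-- The measure `λ(dt) = e^{−t} dt` on `[0, T]`. -/
def lamMeas (T : ℝ) : Measure ℝ :=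
  (volume.restrict (Icc 0 T)).withDensity (fun t => ENNReal.ofReal (Real.exp (-t)))

/-- The pseudo-path of a Borel function `w : [0,T] → ℝˡ`: the pushforward of `λ` under
`t ↦ (t, w(t))`, a finite Borel measure on `[0,T] × ℝˡ`. -/
def pseudoPath {l : ℕ} (T : ℝ) (w : ℝ → Vec l) : Measure (ℝ × Vec l) :=
  Measure.map (fun t => (t, w t)) (lamMeas T)

lemma min_one_dist_triangle {E : Type*} [PseudoMetricSpace E] (a b c : E) :
    min 1 (dist a c) ≤ min 1 (dist a b) + min 1 (dist b c) := by
  have := dist_triangle a b c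
  have := dist_nonneg (x := a) (y := b)
  have := dist_nonneg (x := b) (y := c)
  simp only [min_def]
  split_ifs <;> linarith

lemma min_one_dist_mem_Icc {E : Type*} [PseudoMetricSpace E] (a b : E) :
    min 1 (dist a b) ∈ Icc (0 : ℝ) 1 :=
  ⟨le_min zero_le_one dist_nonneg, min_le_left _ _⟩

open scoped BoundedContinuousFunction

section ConvergenceInMeasure

variable {α ι : Type*} [MeasurableSpace α] {μ : Measure α} {l : Filter ι}

lemma tendstoInMeasure_iff_lt_dist {E : Type*} [PseudoMetricSpace E] {f : ι → α → E}
    {g : α → E} :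
    TendstoInMeasure μ f l g ↔
      ∀ δ > (0 : ℝ), Tendsto (fun i => μ {x | δ < dist (f i x) (g x)}) l (𝓝 0) := by
  rw [tendstoInMeasure_iff_dist]
  refine ⟨fun h δ hδ => ?_, fun h ε hε => ?_⟩
  · exact tendsto_of_tendsto_of_tendsto_of_le_of_le tendsto_const_nhds (h δ hδ)
      (fun _ => zero_le) fun _ => measure_mono <| ofPred_subset_ofPred.2 fun _ => le_of_lt
  · exact tendsto_of_tendsto_of_tendsto_of_le_of_le tendsto_const_nhds (h (ε / 2) (half_pos hε))
      (fun _ => zero_le) fun _ => measure_mono <|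
        ofPred_subset_ofPred.2 fun _ => (half_lt_self hε).trans_le

lemma TendstoInMeasure.prodMk_left {β E : Type*} [PseudoEMetricSpace β] [PseudoEMetricSpace E]
    {f : ι → α → E} {g : α → E} (h : TendstoInMeasure μ f l g) (u : α → β) :
    TendstoInMeasure μ (fun i x => (u x, f i x)) l (fun x => (u x, g x)) := by
  simpa [TendstoInMeasure, Prod.edist_eq] using h

theorem TendstoInMeasure.tendsto_integral_boundedContinuousFunction {X : Type*}
    [PseudoMetricSpace X] [MeasurableSpace X] [OpensMeasurableSpace X] [IsFiniteMeasure μ]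
    [l.IsCountablyGenerated] {f : ι → α → X} {g : α → X} (h : TendstoInMeasure μ f l g)
    (hf : ∀ i, AEMeasurable (f i) μ) (φ : X →ᵇ ℝ) :
    Tendsto (fun i => ∫ x, φ (f i x) ∂μ) l (𝓝 (∫ x, φ (g x) ∂μ)) := by
  refine tendsto_of_subseq_tendsto fun ns hns => ?_
  obtain ⟨ms, -, hms⟩ := (h.comp hns).exists_seq_tendsto_ae
  exact ⟨ms, tendsto_integral_of_dominated_convergence (fun _ => ‖φ‖)
    (fun _ => (φ.continuous.measurable.comp_aemeasurable (hf _)).aestronglyMeasurable)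
    (integrable_const _) (fun _ => ae_of_all _ fun x => φ.norm_coe_le_norm _)
    (hms.mono fun x hx => (φ.continuous.tendsto _).comp hx)⟩

end ConvergenceInMeasure

section TruncatedDistance

variable {α E : Type*} [MeasurableSpace α] {μ : Measure α} [IsFiniteMeasure μ]
  [NormedAddCommGroup E] [MeasurableSpace E] [BorelSpace E] [SecondCountableTopology E]
  {u v w : α → E}

lemma integrable_min_one_dist (hu : Measurable u) (hv : Measurable v) :
    Integrable (fun t => min 1 (dist (u t) (v t))) μ := by
  refine (integrable_const (1 : ℝ)).mono'
    (measurable_const.min (hu.dist hv)).aestronglyMeasurable (ae_of_all _ fun t => ?_)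
  rw [Real.norm_of_nonneg (min_one_dist_mem_Icc _ _).1]
  exact min_le_left _ _

lemma integral_min_one_dist_triangle (hu : Measurable u) (hv : Measurable v)
    (hw : Measurable w) :
    ∫ t, min 1 (dist (u t) (w t)) ∂μ ≤
      ∫ t, min 1 (dist (u t) (v t)) ∂μ + ∫ t, min 1 (dist (v t) (w t)) ∂μ := by
  rw [← integral_add (integrable_min_one_dist hu hv) (integrable_min_one_dist hv hw)]
  exact integral_mono (integrable_min_one_dist hu hw)
    ((integrable_min_one_dist hu hv).add (integrable_min_one_dist hv hw))
    fun t => min_one_dist_triangle _ _ _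

lemma integral_min_one_dist_le_eLpNorm (hu : Measurable u) (hv : Measurable v)
    (huv : Integrable (u - v) μ) :
    ∫ t, min 1 (dist (u t) (v t)) ∂μ ≤ (eLpNorm (u - v) 1 μ).toReal := by
  rw [eLpNorm_one_eq_lintegral_enorm, ← ofReal_integral_norm_eq_lintegral_enorm huv,
    ENNReal.toReal_ofReal (integral_nonneg fun _ => norm_nonneg _)]
  refine integral_mono (integrable_min_one_dist hu hv) huv.norm fun t => ?_
  exact (min_le_right _ _).trans_eq (dist_eq_norm _ _)

lemma tendsto_integral_min_one_dist_of_tendsto {ι : Type*} {l : Filter ι}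
    [l.IsCountablyGenerated] {f : ι → α → E} (hf : ∀ i, Measurable (f i)) (hw : Measurable w)
    (h : ∀ᵐ t ∂μ, Tendsto (fun i => f i t) l (𝓝 (w t))) :
    Tendsto (fun i => ∫ t, min 1 (dist (f i t) (w t)) ∂μ) l (𝓝 0) := by
  have hlim : ∀ᵐ t ∂μ, Tendsto (fun i => min 1 (dist (f i t) (w t))) l (𝓝 0) :=
    h.mono fun t ht => by
      simpa using (tendsto_const_nhds (x := (1 : ℝ))).min (tendsto_iff_dist_tendsto_zero.1 ht)
  simpa using tendsto_integral_filter_of_dominated_convergence (fun _ => 1)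
    (.of_forall fun i => (integrable_min_one_dist (hf i) hw).aestronglyMeasurable)
    (.of_forall fun i => ae_of_all _ fun t => by
      rw [Real.norm_of_nonneg (min_one_dist_mem_Icc _ _).1]; exact min_le_left _ _)
    (integrable_const 1) hlim

lemma tendstoInMeasure_of_tendsto_integral_min_one_dist {ι : Type*} {l : Filter ι}
    {f : ι → α → E} (hf : ∀ i, Measurable (f i)) (hw : Measurable w)
    (h : Tendsto (fun i => ∫ t, min 1 (dist (f i t) (w t)) ∂μ) l (𝓝 0)) :
    TendstoInMeasure μ f l w := by
  rw [tendstoInMeasure_iff_measureReal_dist]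
  intro ε hε
  have hc : 0 < min 1 ε := lt_min one_pos hε
  refine tendsto_of_tendsto_of_tendsto_of_le_of_le tendsto_const_nhds
    (by simpa using h.div_const (min 1 ε)) (fun _ => measureReal_nonneg) fun i => ?_
  rw [le_div_iff₀' hc]
  calc min 1 ε * μ.real {x | ε ≤ dist (f i x) (w x)}
      ≤ min 1 ε * μ.real {x | min 1 ε ≤ min 1 (dist (f i x) (w x))} :=
        mul_le_mul_of_nonneg_left
          (measureReal_mono (ofPred_subset_ofPred.2 fun _ => min_le_min_left 1)) hc.le
    _ ≤ ∫ t, min 1 (dist (f i t) (w t)) ∂μ :=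
        mul_meas_ge_le_integral_of_nonneg (ae_of_all _ fun x => (min_one_dist_mem_Icc _ _).1)
          (integrable_min_one_dist (hf i) hw) _

end TruncatedDistance

def truncDistToGraph {α E : Type*} [TopologicalSpace α] [PseudoMetricSpace E] (v : α →ᵇ E) :
    α × E →ᵇ ℝ :=
  .mkOfBound ⟨fun p => min 1 (dist p.2 (v p.1)),
    continuous_const.min (continuous_snd.dist (v.continuous.comp continuous_fst))⟩ 1
    fun _ _ => Real.dist_le_of_mem_Icc_01 (min_one_dist_mem_Icc _ _) (min_one_dist_mem_Icc _ _)

section ContinuousApproximation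

variable {α E : Type*} [TopologicalSpace α] [NormalSpace α] [MeasurableSpace α] [BorelSpace α]
  {μ : Measure α} [IsFiniteMeasure μ] [μ.WeaklyRegular]
  [NormedAddCommGroup E] [NormedSpace ℝ E] [MeasurableSpace E] [BorelSpace E]
  [SecondCountableTopology E]

lemma exists_boundedContinuous_integral_min_one_dist_le {w : α → E} (hw : Measurable w)
    {ε : ℝ} (hε : 0 < ε) : ∃ v : α →ᵇ E, ∫ t, min 1 (dist (w t) (v t)) ∂μ ≤ ε := by
  have happrox := tendsto_integral_min_one_dist_of_tendsto (μ := μ)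
    (fun n => (hw.stronglyMeasurable.approx n).measurable) hw
    (ae_of_all _ hw.stronglyMeasurable.tendsto_approx)
  obtain ⟨n, hws⟩ := (happrox.eventually_lt_const (half_pos hε)).exists
  set s := hw.stronglyMeasurable.approx n
  have hs : Integrable s μ := s.integrable_of_isFiniteMeasure
  obtain ⟨v, hsv, -⟩ :=
    (memLp_one_iff_integrable.2 hs).exists_boundedContinuous_eLpNorm_sub_le ENNReal.one_ne_top
      (ENNReal.ofReal_pos.2 (half_pos hε)).ne'
  have hsv' : ∫ t, min 1 (dist (s t) (v t)) ∂μ ≤ ε / 2 :=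
    (integral_min_one_dist_le_eLpNorm s.measurable v.continuous.measurable
      (hs.sub (v.integrable μ))).trans (ENNReal.toReal_le_of_le_ofReal (half_pos hε).le hsv)
  refine ⟨v, ?_⟩
  calc ∫ t, min 1 (dist (w t) (v t)) ∂μ
      ≤ ∫ t, min 1 (dist (w t) (s t)) ∂μ + ∫ t, min 1 (dist (s t) (v t)) ∂μ :=
        integral_min_one_dist_triangle hw s.measurable v.continuous.measurable
    _ ≤ ε := by simp only [dist_comm (w _)]; linarith

theorem tendstoInMeasure_of_forall_tendsto_integral_prodMk {ι : Type*} {l : Filter ι}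
    {f : ι → α → E} {g : α → E} (hf : ∀ i, Measurable (f i)) (hg : Measurable g)
    (h : ∀ φ : α × E →ᵇ ℝ,
      Tendsto (fun i => ∫ t, φ (t, f i t) ∂μ) l (𝓝 (∫ t, φ (t, g t) ∂μ))) :
    TendstoInMeasure μ f l g := by
  refine tendstoInMeasure_of_tendsto_integral_min_one_dist hf hg
    (tendsto_order.2 ⟨fun a ha => .of_forall fun _ => ?_, fun b hb => ?_⟩)
  · exact ha.trans_le (integral_nonneg fun t => (min_one_dist_mem_Icc _ _).1)
  obtain ⟨v, hv⟩ := exists_boundedContinuous_integral_min_one_dist_le (μ := μ) hg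
    (div_pos hb three_pos)
  have hfv : ∀ᶠ i in l, ∫ t, min 1 (dist (f i t) (v t)) ∂μ < 2 * b / 3 :=
    (h (truncDistToGraph v)).eventually_lt_const (hv.trans_lt (by linarith))
  filter_upwards [hfv] with i hi
  calc ∫ t, min 1 (dist (f i t) (g t)) ∂μ
      ≤ ∫ t, min 1 (dist (f i t) (v t)) ∂μ + ∫ t, min 1 (dist (v t) (g t)) ∂μ :=
        integral_min_one_dist_triangle (hf i) v.continuous.measurable hg
    _ < b := by simp only [dist_comm (v _)]; linarith

end ContinuousApproximation

instance (T : ℝ) : IsFiniteMeasure (lamMeas T) :=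
  isFiniteMeasure_withDensity_ofReal
    (Real.continuous_exp.comp continuous_neg).integrableOn_Icc.hasFiniteIntegral

lemma integral_pseudoPath {l : ℕ} (T : ℝ) {w : ℝ → Vec l} (hw : Measurable w)
    (φ : ℝ × Vec l →ᵇ ℝ) :
    ∫ p, φ p ∂(pseudoPath T w) = ∫ t, φ (t, w t) ∂(lamMeas T) :=
  integral_map (measurable_id.prodMk hw).aemeasurable φ.continuous.aestronglyMeasurable

theorem pseudoPath_weak_convergence_iff_convergence_in_measure_general
    (T : ℝ) (l : ℕ)
    (wk : ℕ → ℝ → Vec l) (w : ℝ → Vec l)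
    (hwk : ∀ k, Measurable (wk k)) (hw : Measurable w) :
    ((∀ φ : BoundedContinuousFunction (ℝ × Vec l) ℝ,
        Tendsto (fun k => ∫ p, φ p ∂(pseudoPath T (wk k))) atTop
          (𝓝 (∫ p, φ p ∂(pseudoPath T w)))) ↔
      (∀ δ > (0:ℝ),
        Tendsto (fun k => lamMeas T {t : ℝ | δ < dist (wk k t) (w t)}) atTop (𝓝 0))) := by
  simp only [integral_pseudoPath T hw, integral_pseudoPath T (hwk _)]
  rw [← tendstoInMeasure_iff_lt_dist]
  refine ⟨tendstoInMeasure_of_forall_tendsto_integral_prodMk hwk hw, fun h =>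
    TendstoInMeasure.tendsto_integral_boundedContinuousFunction (TendstoInMeasure.prodMk_left h id)
      fun k => (measurable_id.prodMk (hwk k)).aemeasurable⟩

/-- Lemma 6 of the paper: the pseudo-path (Meyer–Zheng) topology is equivalent to
convergence in measure.  For Borel functions `w_k, w : [0,T] → ℝˡ`, the pseudo-paths
`Ψ(w_k)` converge weakly to `Ψ(w)` (i.e. `∫ φ dΨ(w_k) → ∫ φ dΨ(w)` for every bounded
continuous `φ`) if and only if `w_k → w` in `λ`-measure (i.e. for every `δ > 0`,
`λ { t : |w_k(t) − w(t)| > δ } → 0`). -/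
theorem pseudoPath_weak_convergence_iff_convergence_in_measure
    (T : ℝ) (hT : 0 < T) (l : ℕ) (hl : 1 ≤ l)
    (wk : ℕ → ℝ → Vec l) (w : ℝ → Vec l)
    (hwk : ∀ k, Measurable (wk k)) (hw : Measurable w) :
    ((∀ φ : BoundedContinuousFunction (ℝ × Vec l) ℝ,
        Tendsto (fun k => ∫ p, φ p ∂(pseudoPath T (wk k))) atTop
          (𝓝 (∫ p, φ p ∂(pseudoPath T w)))) ↔
      (∀ δ > (0:ℝ),
        Tendsto (fun k => lamMeas T {t : ℝ | δ < dist (wk k t) (w t)}) atTop (𝓝 0))) :=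
  pseudoPath_weak_convergence_iff_convergence_in_measure_general T l wk w hwk hw
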